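/- arXiv:2505.08623 — 3 statements merged into one kernel-verified Lean document; each statement's English description precedes it below -/
import Mathlib

section
/- For z ∈ ℂ, the M-Wright function with parameter β = 1/2 equals the Gaussian kernel: M_{1/2}(z) = (1/√π)·exp(−z²/4). -/
/-!
For `β = 1/2` the Gamma factor of the `n`-th term is `Γ(1/2 - n/2)`. At odd `n` this is `Γ` at a
non-positive integer, so the term vanishes. At `n = 2k` the recursion `Γ(s) = Γ(s + 1) / s`
starting from `Γ(1/2) = √π` gives `Γ(1/2 - k) = √π (-4)^k k! / (2k)!`, and the term becomes
`(1/√π) (-z²/4)^k / k!`: the remaining series is the exponential series of `-z²/4`.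
-/

open scoped Nat

/-- The M-Wright function `M_β(z) = ∑_{n≥0} (-z)^n / (n! Γ(-βn + 1 - β))`. -/
noncomputable def MWright (β : ℝ) (z : ℂ) : ℂ :=
  ∑' n : ℕ, (-z) ^ n / ((n ! : ℂ) * Complex.Gamma (-(β : ℂ) * n + 1 - β))

theorem Complex.Gamma_one_half_sub_nat (k : ℕ) :
    Gamma (1 / 2 - k) = (Real.sqrt Real.pi : ℂ) * (-4) ^ k * k ! / (2 * k)! := by
  induction k with
  | zero =>
    rw [show (1 / 2 - ((0 : ℕ) : ℂ)) = ((1 / 2 : ℝ) : ℂ) by norm_num, Gamma_ofReal,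
      Real.Gamma_one_half_eq]
    simp
  | succ k ih =>
    have hs : (1 / 2 : ℂ) - (k + 1 : ℕ) ≠ 0 := by
      rw [sub_ne_zero]
      intro h
      have := congrArg re h
      norm_num at this
      linarith [(k.cast_nonneg : (0 : ℝ) ≤ k)]
    have hrec := Gamma_add_one _ hs
    rw [show (1 / 2 : ℂ) - (k + 1 : ℕ) + 1 = 1 / 2 - k by push_cast; ring, ih,
      div_eq_iff (Nat.cast_ne_zero.2 (Nat.factorial_ne_zero _))] at hrec
    rw [eq_div_iff (Nat.cast_ne_zero.2 (Nat.factorial_ne_zero _)),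
      show 2 * (k + 1) = (2 * k + 1) + 1 by ring, Nat.factorial_succ, Nat.factorial_succ,
      Nat.factorial_succ]
    push_cast at hrec ⊢
    linear_combination (4 * ((k : ℂ) + 1)) * hrec

noncomputable def mWrightTerm (β : ℝ) (z : ℂ) (n : ℕ) : ℂ :=
  (-z) ^ n / ((n ! : ℂ) * Complex.Gamma (-(β : ℂ) * n + 1 - β))

theorem mWright_eq_tsum_mWrightTerm (β : ℝ) (z : ℂ) :
    MWright β z = ∑' n, mWrightTerm β z n :=
  rfl

-- The Gamma argument is then `-m`, a pole, where Mathlib's `Γ` is `0`: this matches the convention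
-- `1/Γ(-m) = 0` of the series, since `x / 0 = 0`.
theorem mWrightTerm_eq_zero {β : ℝ} (z : ℂ) {n m : ℕ} (h : (β : ℂ) * (n + 1) = m + 1) :
    mWrightTerm β z n = 0 := by
  have harg : -(β : ℂ) * n + 1 - β = -m := by linear_combination -h
  rw [mWrightTerm, harg, Complex.Gamma_neg_nat_eq_zero, mul_zero, div_zero]

theorem mWrightTerm_half_odd (z : ℂ) (k : ℕ) : mWrightTerm (1 / 2) z (2 * k + 1) = 0 :=
  mWrightTerm_eq_zero z (m := k) (by push_cast; ring)

theorem mWrightTerm_half_even (z : ℂ) (k : ℕ) :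
    mWrightTerm (1 / 2) z (2 * k) = (1 / Real.sqrt Real.pi : ℝ) * ((-z ^ 2 / 4) ^ k / k !) := by
  have harg : -((1 / 2 : ℝ) : ℂ) * ((2 * k : ℕ) : ℂ) + 1 - ((1 / 2 : ℝ) : ℂ) = 1 / 2 - k := by
    push_cast; ring
  have hpow : (-z) ^ (2 * k) = (-4) ^ k * (-z ^ 2 / 4) ^ k := by
    rw [pow_mul, ← mul_pow]; ring
  have h2k : ((2 * k)! : ℂ) ≠ 0 := Nat.cast_ne_zero.2 (Nat.factorial_ne_zero _)
  rw [mWrightTerm, harg, hpow, Complex.Gamma_one_half_sub_nat]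
  push_cast
  field_simp

theorem mWright_half (z : ℂ) :
    MWright (1 / 2) z = (1 / Real.sqrt Real.pi : ℝ) * Complex.exp (-z ^ 2 / 4) := by
  have hsupp : Function.support (mWrightTerm (1 / 2) z) ⊆ Set.range (2 * ·) := by
    intro n hn
    obtain ⟨k, rfl | rfl⟩ := Nat.even_or_odd' n
    · exact ⟨k, rfl⟩
    · exact absurd (mWrightTerm_half_odd z k) hn
  calc MWright (1 / 2) z = ∑' k : ℕ, mWrightTerm (1 / 2) z (2 * k) := by
        rw [mWright_eq_tsum_mWrightTerm, (mul_right_injective₀ two_ne_zero).tsum_eq hsupp]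
    _ = (1 / Real.sqrt Real.pi : ℝ) * ∑' k : ℕ, (-z ^ 2 / 4) ^ k / k ! := by
        simp only [mWrightTerm_half_even, tsum_mul_left]
    _ = (1 / Real.sqrt Real.pi : ℝ) * Complex.exp (-z ^ 2 / 4) := by
        rw [Complex.exp_eq_exp_ℂ, NormedSpace.exp_eq_tsum_div]
end

section
/- For a generalised grey Brownian motion B^{β,α}, all odd moments vanish and the even moments satisfy E[(B^{β,α}_t)^{2n}] = (2n)!·t^{nα} / (2^n·Γ(βn+1)) for every n ∈ ℕ and t ≥ 0. -/
open scoped Nat NNReal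
open MeasureTheory ProbabilityTheory Real

/-!
Independence factors the moments: `E[(√Y G)^k] = E[√Y^k] E[G^k]`. The odd moments of the centred
Gaussian `G` vanish because its law is symmetric, and its even moments are `(2n-1)‼ v^n` with
`v = t^α`, by the Gamma integral; together with `E[Y^n] = n!/Γ(βn+1)` and
`(2n)! = 2^n n! (2n-1)‼` this gives the formula.
-/

theorem Nat.factorial_two_mul (n : ℕ) : (2 * n)! = 2 ^ n * n ! * (2 * n - 1)‼ := by
  rcases n with _ | n
  · rfl
  · rw [show 2 * (n + 1) = 2 * n + 1 + 1 by ring, factorial_eq_mul_doubleFactorial,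
      show 2 * n + 1 + 1 = 2 * (n + 1) by ring, doubleFactorial_two_mul]
    rfl

theorem integral_eq_zero_of_comp_neg_eq_neg {G E : Type*} [MeasurableSpace G] [AddGroup G]
    [MeasurableNeg G] [NormedAddCommGroup E] [NormedSpace ℝ E] {μ : Measure G}
    [μ.IsNegInvariant] {f : G → E} (hf : ∀ x, f (-x) = -f x) : ∫ x, f x ∂μ = 0 := by
  have : IsAddTorsionFree E := .of_isTorsionFree ℝ E
  refine self_eq_neg.mp ?_
  calc ∫ x, f x ∂μ = ∫ x, f (-x) ∂μ := (integral_neg_eq_self f μ).symm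
    _ = ∫ x, -f x ∂μ := by simp_rw [hf]
    _ = -∫ x, f x ∂μ := integral_neg f

instance (v : ℝ≥0) : (gaussianReal 0 v).IsNegInvariant :=
  ⟨gaussianReal_map_neg.trans (by rw [neg_zero])⟩

theorem integral_pow_two_mul_add_one_gaussianReal (v : ℝ≥0) (n : ℕ) :
    ∫ x, x ^ (2 * n + 1) ∂gaussianReal 0 v = 0 :=
  integral_eq_zero_of_comp_neg_eq_neg fun x => Odd.neg_pow ⟨n, rfl⟩ x

theorem integral_pow_two_mul_gaussianReal (v : ℝ≥0) (n : ℕ) :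
    ∫ x, x ^ (2 * n) ∂gaussianReal 0 v = (2 * n - 1)‼ * (v : ℝ) ^ n := by
  rcases eq_or_ne v 0 with rfl | hv
  · rcases n with _ | n <;> simp [gaussianReal_zero_var]
  rw [integral_gaussianReal_eq_integral_smul hv]
  calc ∫ x, gaussianPDFReal 0 v x • x ^ (2 * n)
      = (√(2 * π * v))⁻¹ *
          ∫ x, |x| ^ ((2 * n : ℕ) : ℝ) * exp (-(2 * (v : ℝ))⁻¹ * |x| ^ (2 : ℝ)) := by
        rw [← integral_const_mul]
        congr with x
        simp only [gaussianPDFReal, smul_eq_mul, rpow_natCast, rpow_two, sq_abs, pow_mul, sub_zero]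
        ring_nf
    _ = (√(2 * π * v))⁻¹ * ((2 * v) ^ ((n : ℝ) + 1 / 2) * Gamma (n + 1 / 2)) := by
        rw [integral_comp_abs
            (f := fun x => x ^ ((2 * n : ℕ) : ℝ) * exp (-(2 * (v : ℝ))⁻¹ * x ^ (2 : ℝ))),
          integral_rpow_mul_exp_neg_mul_rpow two_pos
            (by linarith [(2 * n : ℕ).cast_nonneg (α := ℝ)]) (by positivity)]
        have hq : (((2 * n : ℕ) : ℝ) + 1) / 2 = n + 1 / 2 := by push_cast; ring
        rw [neg_div, hq, inv_rpow (by positivity), ← rpow_neg (by positivity), neg_neg]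
        ring
    _ = (2 * n - 1)‼ * (v : ℝ) ^ n := by
        rw [Gamma_nat_add_half, rpow_add (by positivity), rpow_natCast, ← sqrt_eq_rpow,
          show 2 * π * v = 2 * v * π by ring, sqrt_mul (by positivity), mul_pow]
        field_simp

theorem ProbabilityTheory.IndepFun.integral_mul_pow {Ω : Type*} [MeasurableSpace Ω]
    {μ : Measure Ω} {X Z : Ω → ℝ} (hXZ : IndepFun X Z μ) (hX : AEMeasurable X μ)
    (hZ : AEMeasurable Z μ) (k : ℕ) :
    ∫ ω, (X ω * Z ω) ^ k ∂μ = (∫ ω, X ω ^ k ∂μ) * ∫ ω, Z ω ^ k ∂μ := by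
  simp_rw [mul_pow]
  exact (hXZ.comp (measurable_id.pow_const k) (measurable_id.pow_const k))
    |>.integral_fun_mul_eq_mul_integral (hX.pow_const k).aestronglyMeasurable
      (hZ.pow_const k).aestronglyMeasurable

theorem ggBm_moments_general {Ω : Type*} [MeasurableSpace Ω]
    (μ : Measure Ω)
    (β α : ℝ)
    (Y : Ω → ℝ) (hYmeas : Measurable Y) (hYpos : ∀ ω, 0 ≤ Y ω)
    (hYmom : ∀ κ : ℝ, -1 < κ →
      ∫ ω, Y ω ^ κ ∂μ = Real.Gamma (1 + κ) / Real.Gamma (1 + β * κ))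
    (G : Ω → ℝ) (hGmeas : Measurable G) (t : ℝ) (ht : 0 ≤ t)
    (hGgauss : Measure.map G μ = gaussianReal 0 (Real.toNNReal (t ^ α)))
    (hindep : IndepFun Y G μ) :
    (∀ n : ℕ, ∫ ω, (Real.sqrt (Y ω) * G ω) ^ (2 * n + 1) ∂μ = 0) ∧
    (∀ n : ℕ, ∫ ω, (Real.sqrt (Y ω) * G ω) ^ (2 * n) ∂μ =
      ((2 * n)! : ℝ) * t ^ (n * α) / (2 ^ n * Real.Gamma (β * n + 1))) := by
  set v := (t ^ α).toNNReal
  have hmoment (k : ℕ) : ∫ ω, (√(Y ω) * G ω) ^ k ∂μ =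
      (∫ ω, √(Y ω) ^ k ∂μ) * ∫ x, x ^ k ∂gaussianReal 0 v := by
    have hindep_sqrt : IndepFun (fun ω => √(Y ω)) G μ :=
      hindep.comp continuous_sqrt.measurable measurable_id
    rw [hindep_sqrt.integral_mul_pow hYmeas.sqrt.aemeasurable hGmeas.aemeasurable, ← hGgauss,
      integral_map hGmeas.aemeasurable (by fun_prop)]
  have hYmom_nat (n : ℕ) : ∫ ω, √(Y ω) ^ (2 * n) ∂μ = n ! / Gamma (β * n + 1) := by
    simp_rw [pow_mul, sq_sqrt (hYpos _), ← rpow_natCast]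
    rw [hYmom n (by linarith [n.cast_nonneg (α := ℝ)]), add_comm 1 (n : ℝ),
      Gamma_nat_eq_factorial, add_comm]
  have hv (n : ℕ) : (v : ℝ) ^ n = t ^ (n * α) := by
    rw [Real.coe_toNNReal _ (rpow_nonneg ht α), ← rpow_natCast, ← rpow_mul ht, mul_comm]
  refine ⟨fun n => by rw [hmoment, integral_pow_two_mul_add_one_gaussianReal, mul_zero],
    fun n => ?_⟩
  rw [hmoment, hYmom_nat, integral_pow_two_mul_gaussianReal, hv, Nat.factorial_two_mul]
  push_cast
  rw [mul_assoc, mul_assoc, mul_div_mul_left _ _ (pow_ne_zero _ two_ne_zero)]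
  ring

theorem ggBm_moments {Ω : Type*} [MeasurableSpace Ω]
    (μ : Measure Ω) [IsProbabilityMeasure μ]
    (β α : ℝ) (hβ : β ∈ Set.Ioc (0 : ℝ) 1) (hα : α ∈ Set.Ioo (0 : ℝ) 2)
    (Y : Ω → ℝ) (hYmeas : Measurable Y) (hYpos : ∀ ω, 0 ≤ Y ω)
    (hYmom : ∀ κ : ℝ, -1 < κ →
      ∫ ω, Y ω ^ κ ∂μ = Real.Gamma (1 + κ) / Real.Gamma (1 + β * κ))
    (G : Ω → ℝ) (hGmeas : Measurable G) (t : ℝ) (ht : 0 ≤ t)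
    (hGgauss : Measure.map G μ = gaussianReal 0 (Real.toNNReal (t ^ α)))
    (hindep : IndepFun Y G μ) :
    (∀ n : ℕ, ∫ ω, (Real.sqrt (Y ω) * G ω) ^ (2 * n + 1) ∂μ = 0) ∧
    (∀ n : ℕ, ∫ ω, (Real.sqrt (Y ω) * G ω) ^ (2 * n) ∂μ =
      ((2 * n)! : ℝ) * t ^ (n * α) / (2 ^ n * Real.Gamma (β * n + 1))) :=
  ggBm_moments_general μ β α Y hYmeas hYpos hYmom G hGmeas t ht hGgauss hindep
end

section
/- For 0 < H < 1 and 0 ≤ t < s, the Riemann–Liouville Volterra covariance satisfies ∫₀^t (t−u)^{H−1/2}(s−u)^{H−1/2} du = s^{H−1/2}·t^{H+1/2}/(H+1/2) · ₂F₁(−(H−1/2), 1, H+3/2, t/s), where ₂F₁ is the Gauss hypergeometric function. -/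
open scoped Nat

/-- The Gauss hypergeometric function `₂F₁(a,b;c;z)` as a series. -/
noncomputable def gaussHypergeometric (a b c z : ℝ) : ℝ :=
  ∑' n : ℕ, ((ascPochhammer ℝ n).eval a * (ascPochhammer ℝ n).eval b) /
    ((ascPochhammer ℝ n).eval c * (n ! : ℝ)) * z ^ n

/-!
Expand `(s - u)^a = s^a (1 - u/s)^a` by the binomial series, which converges absolutely on
`[0, t]` since `t < s`, and integrate term by term against `(t - u)^b`. The resulting
moments are Beta integrals, `∫₀^t u^n (t - u)^b du = n! t^(n+b+1) / (b+1)_(n+1)`, obtained by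
repeated integration by parts; the factor `(b+1)_(n+1) = (b+1) (b+2)_n` turns the series into
`₂F₁(-a, 1; b+2; t/s)`.
-/

open MeasureTheory Set intervalIntegral

theorem ascPochhammer_succ_eval_left {R : Type*} [CommSemiring R] (x : R) (n : ℕ) :
    (ascPochhammer R (n + 1)).eval x = x * (ascPochhammer R n).eval (x + 1) := by
  simp [ascPochhammer_succ_left, Polynomial.eval_comp]

open Polynomial in
theorem ascPochhammer_eval_neg_eq_mul_choose {R : Type*} [Field R] [CharZero R] (a : R) (n : ℕ) :
    (ascPochhammer R n).eval (-a) = (-1) ^ n * n ! * Ring.choose a n := by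
  rw [Ring.choose_eq_smul, ascPochhammer_eval_neg_eq_descPochhammer, smul_eq_mul,
    descPochhammer_smeval_eq_ascPochhammer, ascPochhammer_smeval_eq_eval,
    descPochhammer_eval_eq_ascPochhammer, mul_assoc,
    mul_inv_cancel_left₀ (Nat.cast_ne_zero.2 n.factorial_ne_zero)]

namespace Real

theorem hasSum_choose_mul_pow (a : ℝ) {y : ℝ} (hy : |y| < 1) :
    HasSum (fun n => Ring.choose a n * y ^ n) ((1 + y) ^ a) := by
  have := one_add_rpow_hasFPowerSeriesOnBall_zero (a := a) |>.hasSum (y := y)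
    (by simpa [enorm_eq_nnnorm, ← NNReal.coe_lt_coe] using hy)
  simpa [FormalMultilinearSeries.ofScalars_apply_eq, binomialSeries, mul_comm] using this

theorem summable_abs_choose_mul_pow (a : ℝ) {r : ℝ} (hr0 : 0 ≤ r) (hr : r < 1) :
    Summable (fun n => |Ring.choose a n| * r ^ n) := by
  lift r to NNReal using hr0
  have := (binomialSeries ℝ a).summable_norm_mul_pow (r := r)
    ((show (r : ENNReal) < 1 by exact_mod_cast hr).trans_le binomialSeries_radius_ge_one)
  simpa [binomialSeries, FormalMultilinearSeries.ofScalars_norm] using this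

theorem hasSum_sub_rpow (a : ℝ) {s u : ℝ} (hs : 0 < s) (hu : |u| < s) :
    HasSum (fun n => s ^ a * Ring.choose a n * (-s⁻¹) ^ n * u ^ n) ((s - u) ^ a) := by
  have hus : |-u / s| < 1 := by rwa [abs_div, abs_neg, abs_of_pos hs, div_lt_one hs]
  have hsplit : (s - u) ^ a = s ^ a * (1 + -u / s) ^ a := by
    rw [← mul_rpow hs.le (by linarith [neg_abs_le (-u / s)])]
    congr 1
    field_simp
    ring
  rw [hsplit]
  refine ((hasSum_choose_mul_pow a hus).mul_left (s ^ a)).congr_fun fun n => ?_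
  rw [neg_div, div_eq_mul_inv, ← neg_mul, mul_pow]
  ring

end Real

theorem hasSum_integral_mul_of_hasSum_pow {c : ℕ → ℝ} {g w : ℝ → ℝ} {t : ℝ} (ht : 0 ≤ t)
    (hg : ∀ u ∈ Ioc 0 t, HasSum (fun n => c n * u ^ n) (g u))
    (hc : Summable fun n => |c n| * t ^ n) (hw : IntervalIntegrable w volume 0 t) :
    HasSum (fun n => c n * ∫ u in 0..t, u ^ n * w u) (∫ u in 0..t, w u * g u) := by
  simp_rw [← intervalIntegral.integral_const_mul]
  have hw' : IntegrableOn w (Ioc 0 t) := (intervalIntegrable_iff_integrableOn_Ioc_of_le ht).1 hw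
  refine hasSum_integral_of_dominated_convergence (fun n u => |c n| * t ^ n * |w u|)
    (fun n => ?_) (fun n => ?_) ?_ ?_ ?_
  · rw [uIoc_of_le ht]
    exact ((continuous_pow n).aestronglyMeasurable.mul hw'.aestronglyMeasurable).const_mul _
  · refine .of_forall fun u hu => ?_
    rw [uIoc_of_le ht] at hu
    rw [norm_mul, norm_mul, norm_pow, Real.norm_eq_abs, Real.norm_eq_abs, Real.norm_eq_abs,
      ← mul_assoc, abs_of_pos hu.1]
    gcongr <;> linarith [hu.1, hu.2]
  · exact .of_forall fun u _ => hc.mul_right _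
  · simp_rw [tsum_mul_right]
    exact hw.norm.const_mul _
  · refine .of_forall fun u hu => ?_
    rw [uIoc_of_le ht] at hu
    rw [mul_comm (w u)]
    exact ((hg u hu).mul_right (w u)).congr_fun fun n => by ring

theorem intervalIntegrable_sub_rpow (t : ℝ) {b : ℝ} (hb : -1 < b) :
    IntervalIntegrable (fun u => (t - u) ^ b) volume 0 t := by
  simpa using ((intervalIntegrable_rpow' hb).comp_sub_left t (a := 0) (b := t)).symm

theorem integral_pow_succ_mul_sub_rpow {t b : ℝ} (ht : 0 ≤ t) (hb : -1 < b) (n : ℕ) :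
    ∫ u in 0..t, u ^ (n + 1) * (t - u) ^ b =
      (n + 1) / (b + 1) * ∫ u in 0..t, u ^ n * (t - u) ^ (b + 1) := by
  have hb1 : b + 1 ≠ 0 := by linarith
  have hv : ∀ x ∈ Ioo (min 0 t) (max 0 t),
      HasDerivAt (fun u => -((t - u) ^ (b + 1) / (b + 1))) ((t - x) ^ b) x := by
    intro x hx
    rw [min_eq_left ht, max_eq_right ht] at hx
    refine ((((hasDerivAt_id x).const_sub t).rpow_const (p := b + 1)
      (Or.inl (sub_pos.2 hx.2).ne')).div_const (b + 1)).neg.congr_deriv ?_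
    field_simp
    simp
  have hv_cont : ContinuousOn (fun u => -((t - u) ^ (b + 1) / (b + 1))) (uIcc 0 t) :=
    ((continuous_const.sub continuous_id).continuousOn.rpow_const
      (fun _ _ => Or.inr (by linarith))).div_const _ |>.neg
  rw [integral_mul_deriv_eq_deriv_mul_of_hasDerivAt (u' := fun x => (n + 1) * x ^ n)
    (continuous_pow (n + 1)).continuousOn hv_cont
    (fun x _ => (hasDerivAt_pow (n + 1) x).congr_deriv (by push_cast; ring)) hv
    ((continuous_const.mul (continuous_pow n)).intervalIntegrable _ _)
    (intervalIntegrable_sub_rpow t hb)]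
  simp only [sub_self, Real.zero_rpow hb1, zero_div, neg_zero, mul_zero, zero_sub,
    zero_pow n.succ_ne_zero, zero_mul]
  rw [← intervalIntegral.integral_neg, ← intervalIntegral.integral_const_mul]
  congr 1 with u
  field_simp

theorem integral_pow_mul_sub_rpow {t b : ℝ} (ht : 0 ≤ t) (hb : -1 < b) (n : ℕ) :
    ∫ u in 0..t, u ^ n * (t - u) ^ b =
      n ! * t ^ (n + b + 1) / (ascPochhammer ℝ (n + 1)).eval (b + 1) := by
  induction n generalizing b with
  | zero =>
    simp [integral_comp_sub_left (fun x => x ^ b), integral_rpow (Or.inl hb),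
      Real.zero_rpow (by linarith : b + 1 ≠ 0)]
  | succ n ih =>
    have hb1 : b + 1 ≠ 0 := by linarith
    have hpos : 0 < (ascPochhammer ℝ (n + 1)).eval (b + 1 + 1) :=
      ascPochhammer_pos _ _ (by linarith)
    rw [integral_pow_succ_mul_sub_rpow ht hb, ih (by linarith),
      ascPochhammer_succ_eval_left (b + 1) (n + 1)]
    push_cast [Nat.factorial_succ]
    field_simp
    ring_nf

theorem integral_sub_rpow_mul_sub_rpow (a : ℝ) {b t s : ℝ} (hb : -1 < b) (ht : 0 ≤ t)
    (hts : t < s) :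
    ∫ u in 0..t, (t - u) ^ b * (s - u) ^ a =
      s ^ a * t ^ (b + 1) / (b + 1) * gaussHypergeometric (-a) 1 (b + 2) (t / s) := by
  have hs : 0 < s := ht.trans_lt hts
  have hc : Summable fun n => |s ^ a * Ring.choose a n * (-s⁻¹) ^ n| * t ^ n := by
    refine ((Real.summable_abs_choose_mul_pow a (div_nonneg ht hs.le)
      ((div_lt_one hs).2 hts)).mul_left (s ^ a)).congr fun n => ?_
    rw [abs_mul, abs_mul, abs_pow, abs_neg, abs_of_pos (Real.rpow_pos_of_pos hs a),
      abs_of_pos (inv_pos.2 hs), div_eq_mul_inv, mul_pow]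
    ring
  have hseries := hasSum_integral_mul_of_hasSum_pow ht
    (fun u hu => Real.hasSum_sub_rpow a hs (by rw [abs_of_pos hu.1]; linarith [hu.2]))
    hc (intervalIntegrable_sub_rpow t hb)
  rw [← hseries.tsum_eq, gaussHypergeometric, ← tsum_mul_left]
  refine tsum_congr fun n => ?_
  have hb1 : 0 < b + 1 := by linarith
  have hpos : 0 < (ascPochhammer ℝ n).eval (b + 2) := ascPochhammer_pos _ _ (by linarith)
  have htpow : t ^ ((n : ℝ) + b + 1) = t ^ (b + 1) * t ^ n := by
    rw [← Real.rpow_natCast, ← Real.rpow_add' ht (by positivity)]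
    ring_nf
  rw [integral_pow_mul_sub_rpow ht hb n, ascPochhammer_succ_eval_left, ascPochhammer_eval_one,
    ascPochhammer_eval_neg_eq_mul_choose, htpow, show b + 1 + 1 = b + 2 by ring]
  field_simp
  ring

theorem RL_Volterra_covariance (H : ℝ) (hH : H ∈ Set.Ioo (0 : ℝ) 1)
    (t s : ℝ) (ht : 0 ≤ t) (hts : t < s) :
    ∫ u in (0 : ℝ)..t, (t - u) ^ (H - 1/2) * (s - u) ^ (H - 1/2) =
      s ^ (H - 1/2) * t ^ (H + 1/2) / (H + 1/2) *
        gaussHypergeometric (-(H - 1/2)) 1 (H + 3/2) (t / s) := by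
  have h := integral_sub_rpow_mul_sub_rpow (H - 1/2) (b := H - 1/2) (by linarith [hH.1]) ht hts
  rwa [show H - 1/2 + 1 = H + 1/2 by ring, show H - 1/2 + 2 = H + 3/2 by ring] at h
end
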